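/- For all α, β ∈ ℂ, the operator Ĝ := |000⟩⟨000| + |100⟩⟨1̄00| + |010⟩⟨0̄10| + |011⟩⟨0̄01| on (ℂ²)^{⊗3} satisfies Ĝ|Φ₀⟩ = α|000⟩ + β|100⟩ = (α|0⟩+β|1⟩) ⊗ |0⟩ ⊗ |0⟩, where |Φ₀⟩ := α|000⟩ + (β/√3)(|011⟩+|101⟩+|110⟩). (This is the correctness of Step 3 of the decoder De₄.) -/
import Mathlib


/- Common setup: (ℂ²)^{⊗n} is modeled as functions {0,1}ⁿ → ℂ, with computational
basis kets, outer products |u⟩⟨v|, and the partial trace over the i-th tensor factor. -/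

open Matrix
open scoped ComplexConjugate

noncomputable section

/-- The computational basis ket `|s⟩` for a bit string `s ∈ {0,1}ⁿ`. -/
def ket {n : ℕ} (s : Fin n → Fin 2) : (Fin n → Fin 2) → ℂ :=
  fun x => if x = s then 1 else 0

/-- The outer product `|u⟩⟨v|`. -/
def outer {ι : Type*} (u v : ι → ℂ) : Matrix ι ι ℂ :=
  Matrix.of fun i j => u i * conj (v j)

/-- The partial trace over the `i`-th tensor factor (the single deletion error `D_i`);
it satisfies `ptrace i (A₁ ⊗ ⋯ ⊗ Aₙ) = Tr(A_i) • A₁ ⊗ ⋯ ⊗ A_{i-1} ⊗ A_{i+1} ⊗ ⋯ ⊗ Aₙ`. -/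
def ptrace {m : ℕ} (i : Fin (m + 1))
    (A : Matrix (Fin (m + 1) → Fin 2) (Fin (m + 1) → Fin 2) ℂ) :
    Matrix (Fin m → Fin 2) (Fin m → Fin 2) ℂ :=
  Matrix.of fun y y' => ∑ b : Fin 2, A (i.insertNth b y) (i.insertNth b y')

/-- `|Φ₀⟩ = α|000⟩ + (β/√3)(|011⟩+|101⟩+|110⟩)`. -/
def Phi0 (α β : ℂ) : (Fin 3 → Fin 2) → ℂ :=
  α • ket ![0,0,0]
    + (β / (Real.sqrt 3 : ℂ)) • (ket ![0,1,1] + ket ![1,0,1] + ket ![1,1,0])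

/-- `|Φ₁⟩ = α|111⟩ + (β/√3)(|001⟩+|010⟩+|100⟩)`. -/
def Phi1 (α β : ℂ) : (Fin 3 → Fin 2) → ℂ :=
  α • ket ![1,1,1]
    + (β / (Real.sqrt 3 : ℂ)) • (ket ![0,0,1] + ket ![0,1,0] + ket ![1,0,0])

/-- The operator `F̂ = |000⟩⟨111| + |011⟩⟨100| + |101⟩⟨010| + |110⟩⟨001|` (Step 2 of `De₄`). -/
def Fhat : Matrix (Fin 3 → Fin 2) (Fin 3 → Fin 2) ℂ :=
  outer (ket ![0,0,0]) (ket ![1,1,1]) + outer (ket ![0,1,1]) (ket ![1,0,0])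
    + outer (ket ![1,0,1]) (ket ![0,1,0]) + outer (ket ![1,1,0]) (ket ![0,0,1])

/-- `ω = e^{2πi/3}`, a primitive cube root of unity. -/
def omega : ℂ := Complex.exp (2 * (Real.pi : ℂ) * Complex.I / 3)

/-- `|1̄00⟩ = (|011⟩+|101⟩+|110⟩)/√3`. -/
def bar100 : (Fin 3 → Fin 2) → ℂ :=
  ((Real.sqrt 3 : ℂ))⁻¹ • (ket ![0,1,1] + ket ![1,0,1] + ket ![1,1,0])

/-- `|0̄10⟩ = (|011⟩+ω|101⟩+ω²|110⟩)/√3`. -/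
def bar010 : (Fin 3 → Fin 2) → ℂ :=
  ((Real.sqrt 3 : ℂ))⁻¹ • (ket ![0,1,1] + omega • ket ![1,0,1] + omega ^ 2 • ket ![1,1,0])

/-- `|0̄01⟩ = (|011⟩+ω²|101⟩+ω|110⟩)/√3`. -/
def bar001 : (Fin 3 → Fin 2) → ℂ :=
  ((Real.sqrt 3 : ℂ))⁻¹ • (ket ![0,1,1] + omega ^ 2 • ket ![1,0,1] + omega • ket ![1,1,0])

/-- The operator `Ĝ = |000⟩⟨000| + |100⟩⟨1̄00| + |010⟩⟨0̄10| + |011⟩⟨0̄01|` (Step 3 of `De₄`). -/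
def Ghat : Matrix (Fin 3 → Fin 2) (Fin 3 → Fin 2) ℂ :=
  outer (ket ![0,0,0]) (ket ![0,0,0]) + outer (ket ![1,0,0]) bar100
    + outer (ket ![0,1,0]) bar010 + outer (ket ![0,1,1]) bar001

lemma omega_cube : omega ^ 3 = 1 := by
  rw [omega, ← Complex.exp_nat_mul]
  have : (3 : ℕ) * (2 * (Real.pi : ℂ) * Complex.I / 3) = 2 * Real.pi * Complex.I := by
    push_cast; ring
  rw [this, Complex.exp_two_pi_mul_I]

lemma omega_ne_one : omega ≠ 1 := by
  intro h
  rw [omega, Complex.exp_eq_one_iff] at h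
  obtain ⟨n, hn⟩ := h
  have hπ : (Real.pi : ℂ) ≠ 0 := by exact_mod_cast Real.pi_ne_zero
  have h3 : ((3 * n - 1 : ℤ) : ℂ) * (2 * Real.pi * Complex.I) = 0 := by
    push_cast; linear_combination (-3 : ℂ) * hn
  have : ((3 * n - 1 : ℤ) : ℂ) = 0 := by
    rcases mul_eq_zero.mp h3 with h | h
    · exact h
    · simp [hπ, Complex.I_ne_zero] at h
  have : (3 * n - 1 : ℤ) = 0 := by exact_mod_cast this
  omega

lemma omega_sum : 1 + omega + omega ^ 2 = 0 := by
  have h : (omega - 1) * (1 + omega + omega ^ 2) = omega ^ 3 - 1 := by ring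
  rw [omega_cube, sub_self] at h
  rcases mul_eq_zero.mp h with h1 | h2
  · exact absurd (sub_eq_zero.mp h1) omega_ne_one
  · exact h2



lemma outer_mulVec (u v w : (Fin 3 → Fin 2) → ℂ) :
    (outer u v).mulVec w = (∑ j, conj (v j) * w j) • u := by
  funext x
  simp only [outer, Matrix.mulVec, dotProduct, Matrix.of_apply, Pi.smul_apply, smul_eq_mul,
    Finset.sum_mul]
  exact Finset.sum_congr rfl fun j _ => by ring

lemma sum_ket_mul (s : Fin 3 → Fin 2) (f : (Fin 3 → Fin 2) → ℂ) :
    ∑ j, ket s j * f j = f s := by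
  simp [ket]

lemma conj_ket (s j : Fin 3 → Fin 2) : conj (ket s j) = ket s j := by
  simp [ket, apply_ite (starRingEnd ℂ)]

/-- `Ĝ|Φ₀⟩ = α|000⟩ + β|100⟩` for all `α β : ℂ`. -/
theorem step3_correct (α β : ℂ) :
    Ghat.mulVec (Phi0 α β) = α • ket ![0,0,0] + β • ket ![1,0,0] := by
  have h3 : (Real.sqrt 3 : ℂ) ≠ 0 := by
    simp [Complex.ofReal_ne_zero]
  have hsq : (Real.sqrt 3 : ℂ) * (Real.sqrt 3 : ℂ) = 3 := by
    rw [← Complex.ofReal_mul, Real.mul_self_sqrt (by norm_num)]; norm_num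
  have hcsum : conj omega + (conj omega) ^ 2 = -1 := by
    have := congrArg conj omega_sum
    simp only [map_add, _root_.map_one, map_zero, map_pow] at this
    linear_combination this
  have e1 : Phi0 α β ![0,0,0] = α := by
    simp only [Phi0, Pi.add_apply, Pi.smul_apply, smul_eq_mul, ket,
      if_pos rfl, if_neg (show (![0,0,0] : Fin 3 → Fin 2) ≠ ![0,1,1] by decide),
      if_neg (show (![0,0,0] : Fin 3 → Fin 2) ≠ ![1,0,1] by decide),
      if_neg (show (![0,0,0] : Fin 3 → Fin 2) ≠ ![1,1,0] by decide), if_true]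
    ring
  have e2 : Phi0 α β ![0,1,1] = β / Real.sqrt 3 := by
    simp only [Phi0, Pi.add_apply, Pi.smul_apply, smul_eq_mul, ket,
      if_pos rfl, if_neg (show (![0,1,1] : Fin 3 → Fin 2) ≠ ![0,0,0] by decide),
      if_neg (show (![0,1,1] : Fin 3 → Fin 2) ≠ ![1,0,1] by decide),
      if_neg (show (![0,1,1] : Fin 3 → Fin 2) ≠ ![1,1,0] by decide), if_true]
    ring
  have e3 : Phi0 α β ![1,0,1] = β / Real.sqrt 3 := by
    simp only [Phi0, Pi.add_apply, Pi.smul_apply, smul_eq_mul, ket,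
      if_pos rfl, if_neg (show (![1,0,1] : Fin 3 → Fin 2) ≠ ![0,0,0] by decide),
      if_neg (show (![1,0,1] : Fin 3 → Fin 2) ≠ ![0,1,1] by decide),
      if_neg (show (![1,0,1] : Fin 3 → Fin 2) ≠ ![1,1,0] by decide), if_true]
    ring
  have e4 : Phi0 α β ![1,1,0] = β / Real.sqrt 3 := by
    simp only [Phi0, Pi.add_apply, Pi.smul_apply, smul_eq_mul, ket,
      if_pos rfl, if_neg (show (![1,1,0] : Fin 3 → Fin 2) ≠ ![0,0,0] by decide),
      if_neg (show (![1,1,0] : Fin 3 → Fin 2) ≠ ![0,1,1] by decide),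
      if_neg (show (![1,1,0] : Fin 3 → Fin 2) ≠ ![1,0,1] by decide), if_true]
    ring
  have expand : ∀ c1 c2 : ℂ,
      ∑ j, conj ((((Real.sqrt 3 : ℂ))⁻¹ •
          (ket ![0,1,1] + c1 • ket ![1,0,1] + c2 • ket ![1,1,0])) j) * Phi0 α β j
        = ((Real.sqrt 3 : ℂ))⁻¹ * (Phi0 α β ![0,1,1] + conj c1 * Phi0 α β ![1,0,1]
            + conj c2 * Phi0 α β ![1,1,0]) := by
    intro c1 c2
    have step : ∀ j, conj ((((Real.sqrt 3 : ℂ))⁻¹ •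
          (ket ![0,1,1] + c1 • ket ![1,0,1] + c2 • ket ![1,1,0])) j) * Phi0 α β j
        = ((Real.sqrt 3 : ℂ))⁻¹ * (ket ![0,1,1] j * Phi0 α β j)
          + ((Real.sqrt 3 : ℂ))⁻¹ * conj c1 * (ket ![1,0,1] j * Phi0 α β j)
          + ((Real.sqrt 3 : ℂ))⁻¹ * conj c2 * (ket ![1,1,0] j * Phi0 α β j) := by
      intro j
      simp only [Pi.smul_apply, Pi.add_apply, smul_eq_mul, _root_.map_mul, map_add,
        map_inv₀, Complex.conj_ofReal, conj_ket]
      ring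
    rw [Finset.sum_congr rfl fun j _ => step j]
    rw [Finset.sum_add_distrib, Finset.sum_add_distrib, ← Finset.mul_sum, ← Finset.mul_sum,
      ← Finset.mul_sum, sum_ket_mul, sum_ket_mul, sum_ket_mul]
    ring
  have s0 : ∑ j, conj (ket ![0,0,0] j) * Phi0 α β j = α := by
    simp only [conj_ket, sum_ket_mul, e1]
  have s1 : ∑ j, conj (bar100 j) * Phi0 α β j = β := by
    have := expand 1 1
    simp only [one_smul, _root_.map_one, one_mul] at this
    rw [bar100, this, e2, e3, e4]
    field_simp
    linear_combination (-β) * hsq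
  have s2 : ∑ j, conj (bar010 j) * Phi0 α β j = 0 := by
    rw [bar010, expand omega (omega ^ 2), e2, e3, e4, map_pow]
    have h0 : (1 : ℂ) + conj omega + (conj omega) ^ 2 = 0 := by linear_combination hcsum
    have : ((Real.sqrt 3 : ℂ))⁻¹ * (β / Real.sqrt 3 + conj omega * (β / Real.sqrt 3)
        + (conj omega) ^ 2 * (β / Real.sqrt 3))
        = ((Real.sqrt 3 : ℂ))⁻¹ * (β / Real.sqrt 3) * (1 + conj omega + (conj omega) ^ 2) := by
      ring
    rw [this, h0, mul_zero]
  have s3 : ∑ j, conj (bar001 j) * Phi0 α β j = 0 := by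
    rw [bar001, expand (omega ^ 2) omega, e2, e3, e4, map_pow]
    have h0 : (1 : ℂ) + conj omega + (conj omega) ^ 2 = 0 := by linear_combination hcsum
    have : ((Real.sqrt 3 : ℂ))⁻¹ * (β / Real.sqrt 3 + (conj omega) ^ 2 * (β / Real.sqrt 3)
        + conj omega * (β / Real.sqrt 3))
        = ((Real.sqrt 3 : ℂ))⁻¹ * (β / Real.sqrt 3) * (1 + conj omega + (conj omega) ^ 2) := by
      ring
    rw [this, h0, mul_zero]
  rw [Ghat, Matrix.add_mulVec, Matrix.add_mulVec, Matrix.add_mulVec,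
    outer_mulVec, outer_mulVec, outer_mulVec, outer_mulVec, s0, s1, s2, s3]
  simp


end
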